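/- Let η ∈ M_n(ℂ) be a diagonal matrix with diagonal entries in {+1, −1}, and let M ∈ M_n(ℂ) be Hermitian and positive definite, so that H = η M is pseudohermitian with respect to η. Then H is diagonalizable by a pseudounitary matrix: there exist an invertible S ∈ M_n(ℂ) with S† η S = η and a real diagonal matrix D such that S⁻¹ H S = D. -/

import Mathlib

/-!
Diagonalize `M` and `η` simultaneously by congruence: with `A = M ^ (1/2)` and `U` a unitary
diagonalizing the Hermitian matrix `A⁻¹ η A⁻¹`, the matrix `T = A⁻¹ U` satisfies `Tᴴ M T = 1` and
`Tᴴ η T = diag w` with `w` real. By Sylvester's law of inertia `w` has as many positive (negative)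
entries as `η`, so permuting the columns of `T` and rescaling them by `|w|^(-1/2)` gives `S` with
`Sᴴ η S = η` and `Sᴴ M S` diagonal. Finally `S⁻¹ = η Sᴴ η`, hence `S⁻¹ (η M) S = η (Sᴴ M S)`.
-/

open Matrix ComplexOrder

lemma Real.inv_sqrt_abs_sq_mul {x : ℝ} (hx : x ≠ 0) :
    (√|x|)⁻¹ ^ 2 * x = SignType.sign x := by
  rw [inv_pow, Real.sq_sqrt (abs_nonneg x)]
  nth_rw 2 [← sign_mul_abs x]
  field_simp

lemma Equiv.Perm.exists_comp_eq_of_card_fiber_eq {α γ : Type*} [Finite α] {f g : α → γ}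
    (h : ∀ c, Nat.card {a // f a = c} = Nat.card {a // g a = c}) :
    ∃ π : Equiv.Perm α, ∀ a, f (π a) = g a :=
  ⟨Equiv.ofFiberEquiv fun c => (Finite.card_eq.mp (h c).symm).some, Equiv.ofFiberEquiv_map _⟩

variable {ι : Type*} [Fintype ι]

section WeightedNormSq

variable {𝕜 : Type*} [RCLike 𝕜]

def weightedNormSq (w : ι → ℝ) (x : ι → 𝕜) : ℝ :=
  ∑ i, w i * ‖x i‖ ^ 2

lemma weightedNormSq_pos {w : ι → ℝ} {x : ι → 𝕜} (hx : x ∈ Pi.spanSubset 𝕜 {i | 0 < w i})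
    (hx0 : x ≠ 0) : 0 < weightedNormSq w x := by
  obtain ⟨j, hj⟩ := Function.ne_iff.mp hx0
  have hwj : 0 < w j := by_contra fun h => hj (Pi.mem_spanSubset_iff.mp hx j h)
  refine Finset.sum_pos' (fun i _ => ?_) ⟨j, Finset.mem_univ j, by positivity⟩
  by_cases hi : 0 < w i
  · positivity
  · simp [Pi.mem_spanSubset_iff.mp hx i hi]

lemma weightedNormSq_nonpos {w : ι → ℝ} {x : ι → 𝕜} (hx : x ∈ Pi.spanSubset 𝕜 {i | w i ≤ 0}) :
    weightedNormSq w x ≤ 0 := by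
  refine Finset.sum_nonpos fun i _ => ?_
  by_cases hi : w i ≤ 0
  · exact mul_nonpos_of_nonpos_of_nonneg hi (by positivity)
  · simp [Pi.mem_spanSubset_iff.mp hx i hi]

end WeightedNormSq

namespace Matrix

lemma conjTranspose_submatrix_mul_mul_submatrix {α : Type*} [CommSemiring α] [StarRing α]
    (T X : Matrix ι ι α) (π : Equiv.Perm ι) :
    (T.submatrix id π)ᴴ * X * T.submatrix id π = (Tᴴ * X * T).submatrix π π := by
  ext i j
  simp [mul_apply, conjTranspose_submatrix]

variable [DecidableEq ι]

lemma conjTranspose_mul_diagonal_mul_mul_diagonal {α : Type*} [CommSemiring α] [StarRing α]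
    (T X : Matrix ι ι α) (d : ι → α) :
    (T * diagonal d)ᴴ * X * (T * diagonal d) = diagonal (star d) * (Tᴴ * X * T) * diagonal d := by
  simp only [conjTranspose_mul, diagonal_conjTranspose, Matrix.mul_assoc]

lemma inv_mul_mul_eq_of_conjTranspose_mul_mul_eq {α : Type*} [CommRing α] [StarRing α]
    {E S : Matrix ι ι α} (hE : IsUnit E) (h : Sᴴ * E * S = E) (X : Matrix ι ι α) :
    S⁻¹ * (E⁻¹ * X) * S = E⁻¹ * (Sᴴ * X * S) := by
  have := hE.invertible
  have hS : S⁻¹ = E⁻¹ * Sᴴ * E := inv_eq_left_inv <| by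
    rw [Matrix.mul_assoc, Matrix.mul_assoc, ← Matrix.mul_assoc Sᴴ, h, inv_mul_of_invertible]
  simp [hS, Matrix.mul_assoc]

variable {𝕜 : Type*} [RCLike 𝕜]

lemma star_dotProduct_diagonal_mulVec (w : ι → ℝ) (x : ι → 𝕜) :
    star x ⬝ᵥ diagonal (fun i => (w i : 𝕜)) *ᵥ x = weightedNormSq w x := by
  simp only [dotProduct, mulVec_diagonal, weightedNormSq, Pi.star_apply, RCLike.star_def]
  push_cast
  refine Finset.sum_congr rfl fun i _ => ?_
  rw [mul_left_comm, RCLike.conj_mul]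

lemma weightedNormSq_mulVec {σ τ : ι → ℝ} {R : Matrix ι ι 𝕜}
    (h : Rᴴ * diagonal (fun i => (τ i : 𝕜)) * R = diagonal (fun i => (σ i : 𝕜))) (x : ι → 𝕜) :
    weightedNormSq τ (R *ᵥ x) = weightedNormSq σ x := by
  rw [← RCLike.ofReal_inj (K := 𝕜), ← star_dotProduct_diagonal_mulVec,
    ← star_dotProduct_diagonal_mulVec, ← h]
  simp only [star_mulVec, dotProduct_mulVec, vecMul_vecMul]

lemma ncard_pos_le_of_conjTranspose_mul_diagonal_mul_eq {σ τ : ι → ℝ} {R : Matrix ι ι 𝕜}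
    (hR : IsUnit R)
    (h : Rᴴ * diagonal (fun i => (τ i : 𝕜)) * R = diagonal (fun i => (σ i : 𝕜))) :
    {i | 0 < σ i}.ncard ≤ {i | 0 < τ i}.ncard := by
  let W := (Pi.spanSubset 𝕜 {i | 0 < σ i}).map R.mulVecLin
  let V := Pi.spanSubset 𝕜 {i | τ i ≤ 0}
  have hWV : Disjoint W V := by
    refine Submodule.disjoint_def.mpr fun x hxW hxV => by_contra fun hx0 => ?_
    obtain ⟨y, hy, rfl⟩ := hxW
    have hy0 : y ≠ 0 := by rintro rfl; simp at hx0
    have hpos := weightedNormSq_pos hy hy0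
    rw [← weightedNormSq_mulVec h] at hpos
    exact hpos.not_ge (weightedNormSq_nonpos hxV)
  have hW : Module.finrank 𝕜 W = {i | 0 < σ i}.ncard := by
    rw [← (Submodule.equivMapOfInjective _ (mulVec_injective_iff_isUnit.mpr hR) _).finrank_eq,
      Pi.dim_spanSubset]
  have hdim := Submodule.finrank_add_finrank_le_of_disjoint hWV
  rw [hW, Pi.dim_spanSubset, Module.finrank_fintype_fun_eq_card, ← Nat.card_eq_fintype_card,
    ← Set.ncard_add_ncard_compl {i | 0 < τ i}] at hdim
  simp only [Set.compl_ofPred, not_lt] at hdim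
  omega

lemma ncard_pos_eq_of_conjTranspose_mul_diagonal_mul_eq {σ τ : ι → ℝ} {R : Matrix ι ι 𝕜}
    (hR : IsUnit R)
    (h : Rᴴ * diagonal (fun i => (τ i : 𝕜)) * R = diagonal (fun i => (σ i : 𝕜))) :
    {i | 0 < σ i}.ncard = {i | 0 < τ i}.ncard := by
  refine (ncard_pos_le_of_conjTranspose_mul_diagonal_mul_eq hR h).antisymm
    (ncard_pos_le_of_conjTranspose_mul_diagonal_mul_eq (isUnit_nonsing_inv_iff.mpr hR) ?_)
  have := hR.invertible
  rw [← h, conjTranspose_nonsing_inv]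
  simp [Matrix.mul_assoc]

lemma card_sign_eq_of_conjTranspose_mul_diagonal_mul_eq {σ τ : ι → ℝ} {R : Matrix ι ι 𝕜}
    (hR : IsUnit R)
    (h : Rᴴ * diagonal (fun i => (τ i : 𝕜)) * R = diagonal (fun i => (σ i : 𝕜)))
    (c : SignType) :
    Nat.card {i // SignType.sign (σ i) = c} = Nat.card {i // SignType.sign (τ i) = c} := by
  obtain rfl | rfl | rfl := c.trichotomy
  · have hneg : Rᴴ * diagonal (fun i => ((-τ i : ℝ) : 𝕜)) * R =
        diagonal (fun i => ((-σ i : ℝ) : 𝕜)) := by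
      simpa [← diagonal_neg] using congrArg Neg.neg h
    have := ncard_pos_eq_of_conjTranspose_mul_diagonal_mul_eq hR hneg
    simp only [Left.neg_pos_iff] at this
    simp only [sign_eq_neg_one_iff]
    exact this
  · have hRdet := (isUnit_iff_isUnit_det R).mp hR
    have hrank : Fintype.card {i // (σ i : 𝕜) ≠ 0} = Fintype.card {i // (τ i : 𝕜) ≠ 0} := by
      classical
      rw [← rank_diagonal, ← rank_diagonal, ← h, rank_mul_eq_left_of_isUnit_det _ _ hRdet,
        rank_mul_eq_right_of_isUnit_det _ _ (by simpa [det_conjTranspose] using hRdet.star)]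
    have hzero (ρ : ι → ℝ) :
        Fintype.card {i // ρ i = 0} = Fintype.card ι - Fintype.card {i // (ρ i : 𝕜) ≠ 0} := by
      simpa using Fintype.card_subtype_compl fun i => (ρ i : 𝕜) ≠ 0
    simp only [sign_eq_zero_iff, Nat.card_eq_fintype_card]
    rw [hzero, hzero, hrank]
  · simp only [sign_eq_one_iff]
    exact ncard_pos_eq_of_conjTranspose_mul_diagonal_mul_eq hR h

open scoped MatrixOrder in
lemma PosDef.exists_conjTranspose_mul_mul_eq_one_and_diagonal {M K : Matrix ι ι 𝕜}
    (hM : M.PosDef) (hK : K.IsHermitian) :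
    ∃ (T : Matrix ι ι 𝕜) (w : ι → ℝ), IsUnit T ∧ Tᴴ * M * T = 1 ∧
      Tᴴ * K * T = diagonal (fun i => (w i : 𝕜)) := by
  set A := CFC.sqrt M
  have hA : A.IsHermitian := (CFC.sqrt_nonneg M).posSemidef.1
  have hAA : A * A = M := CFC.sqrt_mul_sqrt_self M hM.posSemidef.nonneg
  have hAu : IsUnit A := (CFC.isUnit_sqrt_iff M hM.posSemidef.nonneg).mpr hM.isUnit
  have hK' := isHermitian_conjTranspose_mul_mul A⁻¹ hK
  have hdiag := hK'.conjStarAlgAut_star_eigenvectorUnitary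
  rw [Unitary.conjStarAlgAut_star_apply, star_eq_conjTranspose] at hdiag
  set U : Matrix ι ι 𝕜 := ↑hK'.eigenvectorUnitary
  have hUU : Uᴴ * U = 1 := mem_unitaryGroup_iff'.mp hK'.eigenvectorUnitary.2
  refine ⟨A⁻¹ * U, hK'.eigenvalues, ?_, ?_, ?_⟩
  · exact (isUnit_nonsing_inv_iff.mpr hAu).mul Unitary.isUnit_coe
  · have := hAu.invertible
    simp [← hAA, conjTranspose_mul, hA.inv.eq, Matrix.mul_assoc, hUU]
  · simpa [Matrix.mul_assoc, conjTranspose_mul, Function.comp_def] using hdiag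

lemma PosDef.exists_conjTranspose_mul_mul_eq_diagonal_and_diagonal_sign {M : Matrix ι ι 𝕜}
    (hM : M.PosDef) {τ : ι → ℝ} (hτ : ∀ i, τ i ≠ 0) :
    ∃ (S : Matrix ι ι 𝕜) (m : ι → ℝ), IsUnit S ∧ Sᴴ * M * S = diagonal (fun i => (m i : 𝕜)) ∧
      Sᴴ * diagonal (fun i => (τ i : 𝕜)) * S =
        diagonal (fun i => ((SignType.sign (τ i) : ℝ) : 𝕜)) := by
  obtain ⟨T, w, hT, hTM, hTτ⟩ := hM.exists_conjTranspose_mul_mul_eq_one_and_diagonal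
    (isHermitian_diagonal_of_self_adjoint (fun i => (τ i : 𝕜)) (by ext; simp))
  obtain ⟨π, hπ⟩ := Equiv.Perm.exists_comp_eq_of_card_fiber_eq
    (card_sign_eq_of_conjTranspose_mul_diagonal_mul_eq hT hTτ)
  have hw (i : ι) : w (π i) ≠ 0 := fun h => hτ i (sign_eq_zero_iff.mp (by rw [← hπ, h, sign_zero]))
  let c : ι → ℝ := fun i => (√|w (π i)|)⁻¹
  refine ⟨T.submatrix id π * diagonal (fun i => (c i : 𝕜)), fun i => c i ^ 2, ?_, ?_, ?_⟩
  · refine ((isUnit_submatrix_equiv (Equiv.refl ι) π).mpr hT).mul ?_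
    simpa [isUnit_diagonal, Pi.isUnit_iff, c] using hw
  · rw [conjTranspose_mul_diagonal_mul_mul_diagonal, conjTranspose_submatrix_mul_mul_submatrix,
      hTM, submatrix_one_equiv, Matrix.mul_one, diagonal_mul_diagonal]
    congr 1
    ext i
    simp [sq]
  · rw [conjTranspose_mul_diagonal_mul_mul_diagonal, conjTranspose_submatrix_mul_mul_submatrix,
      hTτ, submatrix_diagonal_equiv, diagonal_mul_diagonal, diagonal_mul_diagonal]
    congr 1
    ext i
    have hci : c i ^ 2 * w (π i) = SignType.sign (τ i) := by
      rw [← hπ]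
      exact Real.inv_sqrt_abs_sq_mul (hw i)
    rw [Function.comp_apply, ← hci, Pi.star_apply, RCLike.star_def, RCLike.conj_ofReal]
    push_cast
    ring

end Matrix

/-- **Lemma (diagonalization of a pseudohermitian by a pseudounitary).** Let `η` be a
diagonal signature matrix with entries `±1` and let `M` be Hermitian positive definite,
so that `H = η M` is pseudohermitian with respect to `η`. Then `H` is diagonalizable by
a pseudounitary: there are an invertible `S` with `Sᴴ η S = η` and a real diagonal `D`
with `S⁻¹ H S = D`. -/
theorem stmt_10 {n : ℕ} (η : Fin n → ℝ) (hη : ∀ i, η i = 1 ∨ η i = -1)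
    (M : Matrix (Fin n) (Fin n) ℂ) (hM : M.PosDef) :
    ∃ (S : Matrix (Fin n) (Fin n) ℂ) (d : Fin n → ℝ),
      IsUnit S.det ∧
      Sᴴ * Matrix.diagonal (fun i => (η i : ℂ)) * S =
        Matrix.diagonal (fun i => (η i : ℂ)) ∧
      S⁻¹ * (Matrix.diagonal (fun i => (η i : ℂ)) * M) * S =
        Matrix.diagonal (fun i => (d i : ℂ)) := by
  have hsign (i : Fin n) : (SignType.sign (η i) : ℝ) = η i := by
    rcases hη i with h | h <;> simp [h]
  obtain ⟨S, m, hS, hSM, hSη⟩ := hM.exists_conjTranspose_mul_mul_eq_diagonal_and_diagonal_sign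
    (τ := η) fun i => by rcases hη i with h | h <;> simp [h]
  simp only [hsign] at hSη
  set E := diagonal fun i => (η i : ℂ)
  have hEE : E * E = 1 := by
    rw [diagonal_mul_diagonal, ← diagonal_one]
    congr 1
    ext i
    rcases hη i with h | h <;> simp [h]
  have hEinv : E⁻¹ = E := inv_eq_left_inv hEE
  refine ⟨S, fun i => η i * m i, (isUnit_iff_isUnit_det S).mp hS, hSη, ?_⟩
  rw [← hEinv, inv_mul_mul_eq_of_conjTranspose_mul_mul_eq (.of_mul_eq_one E hEE) hSη, hEinv, hSM,
    diagonal_mul_diagonal]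
  push_cast
  rfl
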